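/- Let d ∈ ℕ, d ≥ 1, 1 ≤ p, q < ∞, r ∈ ℕ, δ ≥ 0, and let f ∈ Λ^{p,q}. Then the function (x,y) ↦ ω_r(f,(x,y); δ; ℝ×ℝ^d) also belongs to Λ^{p,q}. -/

import Mathlib

open MeasureTheory Filter Set Asymptotics
open scoped ENNReal NNReal

noncomputable section

lemma aux_sum_rpow {α : Type*} (s : Finset α) (a : α → ℝ≥0∞) {e : ℝ} (he : 0 < e) :
    (∑ i ∈ s, a i) ^ e ≤ (s.card : ℝ≥0∞) ^ e * ∑ i ∈ s, (a i) ^ e := by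
  rcases s.eq_empty_or_nonempty with rfl | hs
  · simp [ENNReal.zero_rpow_of_pos he]
  obtain ⟨i₀, hi₀, hmax⟩ := Finset.exists_max_image s a hs
  calc (∑ i ∈ s, a i) ^ e ≤ ((s.card : ℝ≥0∞) * a i₀) ^ e := by
        refine ENNReal.rpow_le_rpow ?_ he.le
        have := Finset.sum_le_card_nsmul s a (a i₀) (fun i hi => hmax i hi)
        simpa [nsmul_eq_mul] using this
    _ = (s.card : ℝ≥0∞) ^ e * (a i₀) ^ e := ENNReal.mul_rpow_of_nonneg _ _ he.le
    _ ≤ (s.card : ℝ≥0∞) ^ e * ∑ i ∈ s, (a i) ^ e := by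
        gcongr
        exact Finset.single_le_sum (f := fun i => a i ^ e) (fun i _ => zero_le) hi₀

lemma aux_grow (x : ℤ → ℝ) (Δlo : ℝ) (hlo : ∀ k, Δlo ≤ x k - x (k - 1)) :
    ∀ (a : ℤ) (n : ℕ), x a + n * Δlo ≤ x (a + n) := by
  intro a n
  induction n with
  | zero => simp
  | succ n ih =>
    have h1 : Δlo ≤ x (a + n + 1) - x (a + n) := by simpa using hlo (a + n + 1)
    have e : a + ((n : ℤ) + 1) = (a + n) + 1 := by ring
    push_cast
    rw [e]
    push_cast at ih
    linarith

lemma aux_grow' (x : ℤ → ℝ) (Δlo : ℝ) (hlo : ∀ k, Δlo ≤ x k - x (k - 1)) (a b : ℤ)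
    (hab : a ≤ b) : x a + ((b - a : ℤ) : ℝ) * Δlo ≤ x b := by
  obtain ⟨n, rfl⟩ := Int.le.dest hab
  have := aux_grow x Δlo hlo a n
  simpa using this

lemma aux_mono (x : ℤ → ℝ) (Δlo : ℝ) (hΔ : 0 < Δlo) (hlo : ∀ k, Δlo ≤ x k - x (k - 1))
    (a b : ℤ) (hab : a ≤ b) : x a ≤ x b := by
  have h := aux_grow' x Δlo hlo a b hab
  have h2 : (0:ℝ) ≤ ((b - a : ℤ) : ℝ) * Δlo := by
    apply mul_nonneg _ hΔ.le
    exact_mod_cast (by omega : (0:ℤ) ≤ b - a)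
  linarith

lemma aux_exists (x : ℤ → ℝ) (Δlo : ℝ) (hΔ : 0 < Δlo) (hlo : ∀ k, Δlo ≤ x k - x (k - 1))
    (t : ℝ) : ∃ k : ℤ, x (k - 1) ≤ t ∧ t < x k := by
  have Hinh : ∃ z : ℤ, t < x z := by
    set M : ℕ := ⌈(t - x 0) / Δlo⌉₊ + 1 with hM
    refine ⟨(M : ℤ), ?_⟩
    have hg := aux_grow x Δlo hlo 0 M
    simp only [zero_add] at hg
    have hceil : (t - x 0) / Δlo ≤ (⌈(t - x 0) / Δlo⌉₊ : ℝ) := Nat.le_ceil _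
    rw [div_le_iff₀ hΔ] at hceil
    have hMr : (M : ℝ) = (⌈(t - x 0) / Δlo⌉₊ : ℝ) + 1 := by rw [hM]; push_cast; ring
    nlinarith
  have Hbdd : ∃ b : ℤ, ∀ z : ℤ, t < x z → b ≤ z := by
    set M : ℕ := ⌈(x 0 - t) / Δlo⌉₊ with hM
    refine ⟨-(M : ℤ), fun z hz => ?_⟩
    by_contra hcon
    push_neg at hcon
    have h1 : x z ≤ x (-(M : ℤ)) := aux_mono x Δlo hΔ hlo _ _ (by omega)
    have h2 := aux_grow' x Δlo hlo (-(M : ℤ)) 0 (by omega)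
    have hceil : (x 0 - t) / Δlo ≤ (M : ℝ) := Nat.le_ceil _
    rw [div_le_iff₀ hΔ] at hceil
    have he : ((0 - -(M:ℤ) : ℤ) : ℝ) = (M : ℝ) := by push_cast; ring
    rw [he] at h2
    linarith
  obtain ⟨lb, hlb, hmin⟩ := Int.exists_least_of_bdd Hbdd Hinh
  refine ⟨lb, ?_, hlb⟩
  by_contra hcon
  push_neg at hcon
  have := hmin _ hcon
  omega

lemma aux_cover (x : ℤ → ℝ) (Δlo : ℝ) (hΔ : 0 < Δlo) (hlo : ∀ k, Δlo ≤ x k - x (k - 1))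
    (N : ℕ) (Cc : ℝ) (hNC : Cc ≤ (N : ℝ) * Δlo) (k : ℤ) (a t : ℝ)
    (ha1 : x (k - 1) ≤ a) (ha2 : a < x k) (ht1 : a - Cc ≤ t) (ht2 : t ≤ a + Cc) :
    ∃ m : ℤ, -(N : ℤ) ≤ m ∧ m ≤ N ∧ x (k + m - 1) ≤ t ∧ t < x (k + m) := by
  obtain ⟨k', hk'1, hk'2⟩ := aux_exists x Δlo hΔ hlo t
  have e1 : k + (k' - k) = k' := by ring
  have e2 : k + (k' - k) - 1 = k' - 1 := by ring
  refine ⟨k' - k, ?_, ?_, by rw [e2]; exact hk'1, by rw [e1]; exact hk'2⟩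
  · by_contra hcon
    push_neg at hcon
    have hle : k' ≤ k - 1 := by omega
    have hg := aux_grow' x Δlo hlo k' (k - 1) hle
    have hge : (N : ℝ) ≤ ((k - 1 - k' : ℤ) : ℝ) := by exact_mod_cast (by omega : (N : ℤ) ≤ k - 1 - k')
    have : (N : ℝ) * Δlo ≤ ((k - 1 - k' : ℤ) : ℝ) * Δlo := mul_le_mul_of_nonneg_right hge hΔ.le
    linarith
  · by_contra hcon
    push_neg at hcon
    have hle : k ≤ k' - 1 := by omega
    have hg := aux_grow' x Δlo hlo k (k' - 1) hle
    have hge : (N : ℝ) ≤ ((k' - 1 - k : ℤ) : ℝ) := by exact_mod_cast (by omega : (N : ℤ) ≤ k' - 1 - k)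
    have : (N : ℝ) * Δlo ≤ ((k' - 1 - k : ℤ) : ℝ) * Δlo := mul_le_mul_of_nonneg_right hge hΔ.le
    linarith

lemma aux_convex {a Cc t h : ℝ} {r jj : ℕ} (hj : jj ≤ r)
    (ht : t ∈ Set.Icc (a - Cc) (a + Cc)) (htr : t + r * h ∈ Set.Icc (a - Cc) (a + Cc)) :
    a - Cc ≤ t + jj * h ∧ t + jj * h ≤ a + Cc := by
  obtain ⟨ht1, ht2⟩ := ht
  obtain ⟨htr1, htr2⟩ := htr
  have hjr : (jj : ℝ) ≤ (r : ℝ) := by exact_mod_cast hj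
  rcases le_total 0 h with hh | hh
  · have h1 : (jj : ℝ) * h ≤ r * h := mul_le_mul_of_nonneg_right hjr hh
    have h2 : 0 ≤ (jj : ℝ) * h := mul_nonneg (by positivity) hh
    constructor <;> linarith
  · have h1 : (r : ℝ) * h ≤ jj * h := mul_le_mul_of_nonpos_right hjr hh
    have h2 : (jj : ℝ) * h ≤ 0 := mul_nonpos_of_nonneg_of_nonpos (by positivity) hh
    constructor <;> linarith


/-- An admissible partition of `ℝ × ℝ^d`: strictly increasing doubly-infinite sequences of
nodes in the first variable and in each of the `d` remaining variables, whose consecutive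
gaps are bounded below by a positive constant `Δlo` and above by a finite constant `Δhi`. -/
structure AdmissiblePartition (d : ℕ) where
  /-- nodes in the first variable -/
  x : ℤ → ℝ
  /-- nodes in the `i`-th of the remaining `d` variables -/
  y : Fin d → ℤ → ℝ
  /-- a lower mesh bound -/
  Δlo : ℝ
  /-- an upper mesh bound -/
  Δhi : ℝ
  Δlo_pos : 0 < Δlo
  xgap_lo : ∀ k : ℤ, Δlo ≤ x k - x (k - 1)
  xgap_hi : ∀ k : ℤ, x k - x (k - 1) ≤ Δhi
  ygap_lo : ∀ i, ∀ j : ℤ, Δlo ≤ y i j - y i (j - 1)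
  ygap_hi : ∀ i, ∀ j : ℤ, y i j - y i (j - 1) ≤ Δhi

/-- The half-open cell `Q_{jk} = [x_{k-1}, x_k) × ∏ i, [y_{i,jᵢ-1}, y_{i,jᵢ})` of an
admissible partition. -/
def cell {d : ℕ} (P : AdmissiblePartition d) (k : ℤ) (j : Fin d → ℤ) :
    Set (ℝ × (Fin d → ℝ)) :=
  {z | z.1 ∈ Set.Ico (P.x (k - 1)) (P.x k) ∧
    ∀ i, z.2 i ∈ Set.Ico (P.y i (j i - 1)) (P.y i (j i))}

/-- The volume `Δ_{jk}` of the cell `Q_{jk}`. -/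
def cellVol {d : ℕ} (P : AdmissiblePartition d) (k : ℤ) (j : Fin d → ℤ) : ℝ :=
  (P.x k - P.x (k - 1)) * ∏ i, (P.y i (j i) - P.y i (j i - 1))

/-- The discrete mixed `ℓ^{p,q}(Σ)` norm of `f : ℝ × ℝ^d → ℂ` with respect to an
admissible partition:
`‖f‖ = (∑_k (∑_j sup_{Q_{jk}} |f|^q · Δ_{jk})^{p/q})^{1/p}` (valued in `ℝ≥0∞`). -/
def discNorm (d : ℕ) (p q : ℝ) (P : AdmissiblePartition d)
    (f : ℝ × (Fin d → ℝ) → ℂ) : ℝ≥0∞ :=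
  (∑' k : ℤ, (∑' j : Fin d → ℤ,
      (⨆ z ∈ cell P k j, ENNReal.ofReal ‖f z‖) ^ q *
        ENNReal.ofReal (cellVol P k j)) ^ (p / q)) ^ (1 / p)

/-- Membership in `Λ^{p,q}`: `f` is measurable and has finite discrete mixed norm with
respect to every admissible partition. -/
def MemLambda (d : ℕ) (p q : ℝ) (f : ℝ × (Fin d → ℝ) → ℂ) : Prop :=
  Measurable f ∧ ∀ P : AdmissiblePartition d, discNorm d p q P f < ⊤

/-- The `r`-th finite difference of `f : ℝ × ℝ^d → ℂ` with step `h` in every coordinate. -/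
def fdiffC (d r : ℕ) (h : ℝ) (f : ℝ × (Fin d → ℝ) → ℂ) (z : ℝ × (Fin d → ℝ)) : ℂ :=
  ∑ j ∈ Finset.range (r + 1),
    ((-1 : ℂ) ^ (r - j) * (r.choose j : ℂ)) * f (z.1 + j * h, fun i => z.2 i + j * h)

/-- The local modulus of smoothness of order `r` of `f : ℝ × ℝ^d → ℂ` on all of
`ℝ × ℝ^d` at the point `z`, for `δ ≥ 0` (valued in `ℝ≥0∞`). -/
def locModC (d r : ℕ) (f : ℝ × (Fin d → ℝ) → ℂ) (δ : ℝ) (z : ℝ × (Fin d → ℝ)) : ℝ≥0∞ :=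
  ⨆ (h : ℝ) (t : ℝ) (s : Fin d → ℝ)
    (_ : t ∈ Set.Icc (z.1 - r * δ / 2) (z.1 + r * δ / 2))
    (_ : t + r * h ∈ Set.Icc (z.1 - r * δ / 2) (z.1 + r * δ / 2))
    (_ : ∀ i, s i ∈ Set.Icc (z.2 i - r * δ / 2) (z.2 i + r * δ / 2))
    (_ : ∀ i, s i + r * h ∈ Set.Icc (z.2 i - r * δ / 2) (z.2 i + r * δ / 2)),
    ENNReal.ofReal ‖fdiffC d r h f (t, s)‖

/-- The `L^{p,q}`-averaged modulus of smoothness of order `r` of `f : ℝ × ℝ^d → ℂ`: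
`τ_r(f;δ;ℝ×ℝ^d)_{p,q} = ‖ω_r(f,·;δ)‖_{L^{p,q}}`. -/
def tauModC (d r : ℕ) (p q : ℝ) (f : ℝ × (Fin d → ℝ) → ℂ) (δ : ℝ) : ℝ≥0∞ :=
  (∫⁻ x : ℝ, (∫⁻ y : Fin d → ℝ, (locModC d r f δ (x, y)) ^ q) ^ (p / q)) ^ (1 / p)

/-- The discrete mixed `ℓ^{p,q}(Σ)` norm of an `ℝ≥0∞`-valued function `g` with respect to
an admissible partition. -/
def discNormE (d : ℕ) (p q : ℝ) (P : AdmissiblePartition d)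
    (g : ℝ × (Fin d → ℝ) → ℝ≥0∞) : ℝ≥0∞ :=
  (∑' k : ℤ, (∑' j : Fin d → ℤ,
      (⨆ z ∈ cell P k j, g z) ^ q * ENNReal.ofReal (cellVol P k j)) ^ (p / q)) ^ (1 / p)


lemma aux_fdiff (d r : ℕ) (h : ℝ) (f : ℝ × (Fin d → ℝ) → ℂ) (t : ℝ) (s : Fin d → ℝ) :
    ENNReal.ofReal ‖fdiffC d r h f (t, s)‖ ≤
      ∑ jj ∈ Finset.range (r + 1),
        (r.choose jj : ℝ≥0∞) * ENNReal.ofReal ‖f (t + jj * h, fun i => s i + jj * h)‖ := by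
  simp only [fdiffC]
  refine le_trans (ENNReal.ofReal_le_ofReal (norm_sum_le _ _)) ?_
  rw [ENNReal.ofReal_sum_of_nonneg (fun jj _ => norm_nonneg _)]
  refine Finset.sum_le_sum fun jj _ => ?_
  have hc : ‖((-1 : ℂ)) ^ (r - jj) * (r.choose jj : ℂ)‖ = (r.choose jj : ℝ) := by
    simp
  rw [norm_mul, hc, ENNReal.ofReal_mul (by positivity), ENNReal.ofReal_natCast]

/-- if `f ∈ Λ^{p,q}`, then the local modulus of smoothness
`(x,y) ↦ ω_r(f,(x,y);δ;ℝ×ℝ^d)` also belongs to `Λ^{p,q}`, i.e. it has finite discrete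
mixed norm with respect to every admissible partition. -/
theorem locMod_mem_lambda
    (d : ℕ) (hd : 1 ≤ d) (p q : ℝ) (hp : 1 ≤ p) (hq : 1 ≤ q)
    (r : ℕ) (hr : 1 ≤ r) (δ : ℝ) (hδ : 0 ≤ δ)
    (f : ℝ × (Fin d → ℝ) → ℂ) (hf : MemLambda d p q f) :
    ∀ P : AdmissiblePartition d, discNormE d p q P (locModC d r f δ) < ⊤ := by
  intro P
  obtain ⟨hfm, hfP⟩ := hf
  have hq0 : (0:ℝ) < q := lt_of_lt_of_le one_pos hq
  have hp0 : (0:ℝ) < p := lt_of_lt_of_le one_pos hp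
  have hpq : (0:ℝ) < p / q := div_pos hp0 hq0
  have hΔlo := P.Δlo_pos
  have hΔhi0 : 0 < P.Δhi := lt_of_lt_of_le hΔlo (le_trans (P.xgap_lo 0) (P.xgap_hi 0))
  set N : ℕ := ⌈((r:ℝ) * δ / 2) / P.Δlo⌉₊ with hNdef
  have hNC : (r:ℝ) * δ / 2 ≤ (N : ℝ) * P.Δlo := by
    have h1 : ((r:ℝ) * δ / 2) / P.Δlo ≤ (N : ℝ) := Nat.le_ceil _
    rw [div_le_iff₀ hΔlo] at h1
    linarith
  set F : ℝ × (Fin d → ℝ) → ℝ≥0∞ := fun z => ENNReal.ofReal ‖f z‖ with hF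
  set T : ℤ → (Fin d → ℤ) → ℝ≥0∞ := fun k j => ⨆ z ∈ cell P k j, F z with hT
  set V : ℤ → (Fin d → ℤ) → ℝ≥0∞ := fun k j => ENNReal.ofReal (cellVol P k j) with hV
  set A : ℤ → ℝ≥0∞ := fun k => ∑' j : Fin d → ℤ, T k j ^ q * V k j with hA
  set S : Finset (ℤ × (Fin d → ℤ)) :=
    Finset.Icc (-(N:ℤ)) (N:ℤ) ×ˢ Fintype.piFinset (fun _ => Finset.Icc (-(N:ℤ)) (N:ℤ)) with hS
  set B : ℤ → (Fin d → ℤ) → ℝ≥0∞ :=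
    fun k j => ∑ u ∈ S, T (k + u.1) (fun i => j i + u.2 i) with hB
  -- volume bounds
  have hvol_lo : ∀ (k : ℤ) (j : Fin d → ℤ), P.Δlo ^ (d+1) ≤ cellVol P k j := by
    intro k j
    rw [pow_succ']
    have h1 : P.Δlo ^ d ≤ ∏ i, (P.y i (j i) - P.y i (j i - 1)) := by
      calc P.Δlo ^ d = ∏ _i : Fin d, P.Δlo := by simp
        _ ≤ _ := Finset.prod_le_prod (fun i _ => hΔlo.le) (fun i _ => P.ygap_lo i (j i))
    exact mul_le_mul (P.xgap_lo k) h1 (by positivity) (le_trans hΔlo.le (P.xgap_lo k))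
  have hvol_hi : ∀ (k : ℤ) (j : Fin d → ℤ), cellVol P k j ≤ P.Δhi ^ (d+1) := by
    intro k j
    rw [pow_succ']
    have h1 : ∏ i, (P.y i (j i) - P.y i (j i - 1)) ≤ P.Δhi ^ d := by
      calc (∏ i, (P.y i (j i) - P.y i (j i - 1))) ≤ ∏ _i : Fin d, P.Δhi :=
            Finset.prod_le_prod (fun i _ => le_trans hΔlo.le (P.ygap_lo i (j i)))
              (fun i _ => P.ygap_hi i (j i))
        _ = P.Δhi ^ d := by simp
    refine mul_le_mul (P.xgap_hi k) h1 ?_ hΔhi0.le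
    exact Finset.prod_nonneg fun i _ => le_trans hΔlo.le (P.ygap_lo i (j i))
  set K2 : ℝ≥0∞ := ENNReal.ofReal (P.Δhi ^ (d+1) / P.Δlo ^ (d+1)) with hK2
  have hVK : ∀ (k : ℤ) (j : Fin d → ℤ) (k' : ℤ) (j' : Fin d → ℤ), V k j ≤ K2 * V k' j' := by
    intro k j k' j'
    have hL : (0:ℝ) < P.Δlo ^ (d+1) := by positivity
    calc V k j ≤ ENNReal.ofReal (P.Δhi ^ (d+1)) := ENNReal.ofReal_le_ofReal (hvol_hi k j)
      _ = ENNReal.ofReal (P.Δhi ^ (d+1) / P.Δlo ^ (d+1) * P.Δlo ^ (d+1)) := by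
          rw [div_mul_cancel₀ _ hL.ne']
      _ = K2 * ENNReal.ofReal (P.Δlo ^ (d+1)) := ENNReal.ofReal_mul (by positivity)
      _ ≤ K2 * V k' j' := mul_le_mul_right (ENNReal.ofReal_le_ofReal (hvol_lo k' j')) _
  -- covering bound
  have hcov : ∀ (k : ℤ) (j : Fin d → ℤ) (z w : ℝ × (Fin d → ℝ)), z ∈ cell P k j →
      (z.1 - (r:ℝ) * δ / 2 ≤ w.1 ∧ w.1 ≤ z.1 + (r:ℝ) * δ / 2) →
      (∀ i, z.2 i - (r:ℝ) * δ / 2 ≤ w.2 i ∧ w.2 i ≤ z.2 i + (r:ℝ) * δ / 2) →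
      F w ≤ B k j := by
    intro k j z w hz hw1 hw2
    obtain ⟨hzx, hzy⟩ := hz
    obtain ⟨m, hm1, hm2, hmx1, hmx2⟩ :=
      aux_cover P.x P.Δlo hΔlo P.xgap_lo N ((r:ℝ) * δ / 2) hNC k z.1 w.1 hzx.1 hzx.2 hw1.1 hw1.2
    have hcovy : ∀ i, ∃ n : ℤ, -(N:ℤ) ≤ n ∧ n ≤ N ∧
        P.y i (j i + n - 1) ≤ w.2 i ∧ w.2 i < P.y i (j i + n) := fun i =>
      aux_cover (P.y i) P.Δlo hΔlo (P.ygap_lo i) N ((r:ℝ) * δ / 2) hNC (j i) (z.2 i) (w.2 i)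
        (hzy i).1 (hzy i).2 (hw2 i).1 (hw2 i).2
    choose n hn1 hn2 hny1 hny2 using hcovy
    have hmem : w ∈ cell P (k + m) (fun i => j i + n i) :=
      ⟨⟨hmx1, hmx2⟩, fun i => ⟨hny1 i, hny2 i⟩⟩
    have hle : F w ≤ T (k + m) (fun i => j i + n i) :=
      le_iSup₂ (f := fun z (_ : z ∈ cell P (k + m) (fun i => j i + n i)) => F z) w hmem
    refine hle.trans ?_
    refine Finset.single_le_sum
      (f := fun u : ℤ × (Fin d → ℤ) => T (k + u.1) (fun i => j i + u.2 i))
      (fun _ _ => zero_le) (a := (m, n)) ?_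
    exact Finset.mem_product.mpr ⟨Finset.mem_Icc.mpr ⟨hm1, hm2⟩,
      Fintype.mem_piFinset.mpr fun i => Finset.mem_Icc.mpr ⟨hn1 i, hn2 i⟩⟩
  -- sup bound on each cell
  have hW : ∀ (k : ℤ) (j : Fin d → ℤ),
      (⨆ z ∈ cell P k j, locModC d r f δ z) ≤ (2:ℝ≥0∞) ^ r * B k j := by
    intro k j
    refine iSup₂_le fun z hz => ?_
    rw [locModC]
    refine iSup_le fun h => iSup_le fun t => iSup_le fun s => iSup_le fun ht =>
      iSup_le fun htr => iSup_le fun hs => iSup_le fun hsr => ?_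
    have key : ∀ jj ∈ Finset.range (r + 1),
        F (t + jj * h, fun i => s i + jj * h) ≤ B k j := by
      intro jj hjj
      have hjjr : jj ≤ r := Nat.lt_succ_iff.mp (Finset.mem_range.mp hjj)
      have hxb := aux_convex hjjr ht htr
      have hyb : ∀ i, z.2 i - (r:ℝ) * δ / 2 ≤ s i + jj * h ∧
          s i + jj * h ≤ z.2 i + (r:ℝ) * δ / 2 := fun i => aux_convex hjjr (hs i) (hsr i)
      exact hcov k j z (t + jj * h, fun i => s i + jj * h) hz hxb hyb
    calc ENNReal.ofReal ‖fdiffC d r h f (t, s)‖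
        ≤ ∑ jj ∈ Finset.range (r + 1),
            (r.choose jj : ℝ≥0∞) * F (t + jj * h, fun i => s i + jj * h) :=
          aux_fdiff d r h f t s
      _ ≤ ∑ jj ∈ Finset.range (r + 1), (r.choose jj : ℝ≥0∞) * B k j :=
          Finset.sum_le_sum fun jj hjj => mul_le_mul_right (key jj hjj) _
      _ = (2:ℝ≥0∞) ^ r * B k j := by
          rw [← Finset.sum_mul, ← Nat.cast_sum, Nat.sum_range_choose]
          norm_cast
  -- per-cell bound with volumes
  set K3 : ℝ≥0∞ := ((2:ℝ≥0∞) ^ r) ^ q * (S.card : ℝ≥0∞) ^ q * K2 with hK3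
  have hterm : ∀ (k : ℤ) (j : Fin d → ℤ),
      (⨆ z ∈ cell P k j, locModC d r f δ z) ^ q * V k j ≤
      K3 * ∑ u ∈ S, T (k + u.1) (fun i => j i + u.2 i) ^ q *
        V (k + u.1) (fun i => j i + u.2 i) := by
    intro k j
    calc (⨆ z ∈ cell P k j, locModC d r f δ z) ^ q * V k j
        ≤ ((2:ℝ≥0∞) ^ r * B k j) ^ q * V k j :=
          mul_le_mul_left (ENNReal.rpow_le_rpow (hW k j) hq0.le) _
      _ = ((2:ℝ≥0∞) ^ r) ^ q * (B k j) ^ q * V k j := by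
          rw [ENNReal.mul_rpow_of_nonneg _ _ hq0.le]
      _ ≤ ((2:ℝ≥0∞) ^ r) ^ q * ((S.card : ℝ≥0∞) ^ q *
            ∑ u ∈ S, T (k + u.1) (fun i => j i + u.2 i) ^ q) * V k j := by
          gcongr
          exact aux_sum_rpow S _ hq0
      _ = ((2:ℝ≥0∞) ^ r) ^ q * (S.card : ℝ≥0∞) ^ q *
            ∑ u ∈ S, (T (k + u.1) (fun i => j i + u.2 i) ^ q * V k j) := by
          rw [← Finset.sum_mul]
          ring
      _ ≤ ((2:ℝ≥0∞) ^ r) ^ q * (S.card : ℝ≥0∞) ^ q *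
            ∑ u ∈ S, (K2 * (T (k + u.1) (fun i => j i + u.2 i) ^ q *
              V (k + u.1) (fun i => j i + u.2 i))) := by
          refine mul_le_mul_right (Finset.sum_le_sum fun u hu => ?_) _
          calc T (k + u.1) (fun i => j i + u.2 i) ^ q * V k j
              ≤ T (k + u.1) (fun i => j i + u.2 i) ^ q *
                (K2 * V (k + u.1) (fun i => j i + u.2 i)) :=
                mul_le_mul_right (hVK k j (k + u.1) (fun i => j i + u.2 i)) _
            _ = K2 * (T (k + u.1) (fun i => j i + u.2 i) ^ q *
                V (k + u.1) (fun i => j i + u.2 i)) := by ring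
      _ = K3 * ∑ u ∈ S, T (k + u.1) (fun i => j i + u.2 i) ^ q *
            V (k + u.1) (fun i => j i + u.2 i) := by
          rw [← Finset.mul_sum]
          ring
  -- shift invariance in j
  have hshiftj : ∀ (k' : ℤ) (c : Fin d → ℤ),
      (∑' j : Fin d → ℤ, T k' (fun i => j i + c i) ^ q * V k' (fun i => j i + c i)) = A k' := by
    intro k' c
    exact (Equiv.addRight c).tsum_eq (fun j => T k' j ^ q * V k' j)
  -- inner sum bound
  have hInner : ∀ k : ℤ,
      (∑' j : Fin d → ℤ, (⨆ z ∈ cell P k j, locModC d r f δ z) ^ q * V k j) ≤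
      K3 * ∑ u ∈ S, A (k + u.1) := by
    intro k
    calc (∑' j : Fin d → ℤ, (⨆ z ∈ cell P k j, locModC d r f δ z) ^ q * V k j)
        ≤ ∑' j : Fin d → ℤ, K3 * ∑ u ∈ S, T (k + u.1) (fun i => j i + u.2 i) ^ q *
            V (k + u.1) (fun i => j i + u.2 i) := ENNReal.tsum_le_tsum (hterm k)
      _ = K3 * ∑' j : Fin d → ℤ, ∑ u ∈ S, T (k + u.1) (fun i => j i + u.2 i) ^ q *
            V (k + u.1) (fun i => j i + u.2 i) := ENNReal.tsum_mul_left
      _ = K3 * ∑ u ∈ S, ∑' j : Fin d → ℤ, T (k + u.1) (fun i => j i + u.2 i) ^ q *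
            V (k + u.1) (fun i => j i + u.2 i) := by
          rw [Summable.tsum_finsetSum (fun u _ => ENNReal.summable)]
      _ = K3 * ∑ u ∈ S, A (k + u.1) := by
          congr 1
          exact Finset.sum_congr rfl fun u _ => hshiftj (k + u.1) u.2
  -- finiteness of the f-side sum
  have hD : (∑' k : ℤ, A k ^ (p / q)) ^ (1 / p) < ⊤ := hfP P
  have hAfin : (∑' k : ℤ, A k ^ (p / q)) ≠ ⊤ := by
    intro hcon
    rw [hcon, ENNReal.top_rpow_of_pos (by positivity)] at hD
    exact (lt_irrefl _ hD)
  -- assemble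
  have hK3ne : K3 ≠ ⊤ := by
    refine ENNReal.mul_ne_top (ENNReal.mul_ne_top ?_ ?_) ?_
    · exact ENNReal.rpow_ne_top_of_nonneg hq0.le (by simp)
    · exact ENNReal.rpow_ne_top_of_nonneg hq0.le (by simp)
    · exact ENNReal.ofReal_ne_top
  have htotal : (∑' k : ℤ, (∑' j : Fin d → ℤ,
      (⨆ z ∈ cell P k j, locModC d r f δ z) ^ q * V k j) ^ (p / q)) ≠ ⊤ := by
    have hstep : ∀ k : ℤ, (∑' j : Fin d → ℤ,
        (⨆ z ∈ cell P k j, locModC d r f δ z) ^ q * V k j) ^ (p / q) ≤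
        K3 ^ (p / q) * ((S.card : ℝ≥0∞) ^ (p / q) * ∑ u ∈ S, A (k + u.1) ^ (p / q)) := by
      intro k
      calc (∑' j : Fin d → ℤ, (⨆ z ∈ cell P k j, locModC d r f δ z) ^ q * V k j) ^ (p / q)
          ≤ (K3 * ∑ u ∈ S, A (k + u.1)) ^ (p / q) :=
            ENNReal.rpow_le_rpow (hInner k) hpq.le
        _ = K3 ^ (p / q) * (∑ u ∈ S, A (k + u.1)) ^ (p / q) :=
            ENNReal.mul_rpow_of_nonneg _ _ hpq.le
        _ ≤ K3 ^ (p / q) * ((S.card : ℝ≥0∞) ^ (p / q) * ∑ u ∈ S, A (k + u.1) ^ (p / q)) := by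
            gcongr
            exact aux_sum_rpow S _ hpq
    have hsum : (∑' k : ℤ, (∑' j : Fin d → ℤ,
        (⨆ z ∈ cell P k j, locModC d r f δ z) ^ q * V k j) ^ (p / q)) ≤
        K3 ^ (p / q) * ((S.card : ℝ≥0∞) ^ (p / q) *
          ((S.card : ℝ≥0∞) * ∑' k : ℤ, A k ^ (p / q))) := by
      calc (∑' k : ℤ, (∑' j : Fin d → ℤ,
          (⨆ z ∈ cell P k j, locModC d r f δ z) ^ q * V k j) ^ (p / q))
          ≤ ∑' k : ℤ, K3 ^ (p / q) * ((S.card : ℝ≥0∞) ^ (p / q) *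
              ∑ u ∈ S, A (k + u.1) ^ (p / q)) := ENNReal.tsum_le_tsum hstep
        _ = K3 ^ (p / q) * ((S.card : ℝ≥0∞) ^ (p / q) *
              ∑' k : ℤ, ∑ u ∈ S, A (k + u.1) ^ (p / q)) := by
            rw [ENNReal.tsum_mul_left, ENNReal.tsum_mul_left]
        _ = K3 ^ (p / q) * ((S.card : ℝ≥0∞) ^ (p / q) *
              ∑ u ∈ S, ∑' k : ℤ, A (k + u.1) ^ (p / q)) := by
            rw [Summable.tsum_finsetSum (fun u _ => ENNReal.summable)]
        _ = K3 ^ (p / q) * ((S.card : ℝ≥0∞) ^ (p / q) *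
              ∑ u ∈ S, ∑' k : ℤ, A k ^ (p / q)) := by
            congr 2
            refine Finset.sum_congr rfl fun u _ => ?_
            exact (Equiv.addRight u.1).tsum_eq (fun k => A k ^ (p / q))
        _ = K3 ^ (p / q) * ((S.card : ℝ≥0∞) ^ (p / q) *
              ((S.card : ℝ≥0∞) * ∑' k : ℤ, A k ^ (p / q))) := by
            rw [Finset.sum_const, nsmul_eq_mul]
    refine ne_top_of_le_ne_top ?_ hsum
    refine ENNReal.mul_ne_top (ENNReal.rpow_ne_top_of_nonneg hpq.le hK3ne) ?_
    refine ENNReal.mul_ne_top (ENNReal.rpow_ne_top_of_nonneg hpq.le (by simp)) ?_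
    exact ENNReal.mul_ne_top (by simp) hAfin
  exact ENNReal.rpow_lt_top_of_nonneg (by positivity) htotal
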